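/- Let d ≥ 2 be an integer. For z ∈ ℝ^d with z_d > 0 and r_{d−1} := (z₁² + ⋯ + z_{d−1}²)^{1/2} > 0, setting g(z) := arsinh(r_{d−1}/z_d), the function f = g² satisfies 2 ≤ z_d² · (∂²/∂z₁² + ⋯ + ∂²/∂z_d²) f(z) ≤ 2(d−1) + 2·g(z). -/

import Mathlib

/-!
Write `h = z_d`, `r = r_{d-1}` and `w = r / h`, so that `f = G ∘ w` with `G = arsinh²`.
By the chain rule `∂ᵢ²f = G''(w) (∂ᵢw)² + G'(w) ∂ᵢ²w`, and for `w = r / h` one finds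
`h² |∇w|² = 1 + w²` and `h² Δw = (d - 2) / w + 2w`. Hence
`h² Δf = 2 + 2 arsinh w · w / √(1 + w²) + 2 (d - 2) arsinh w / (w √(1 + w²))`
depends on `w` alone, and the bounds follow from `0 ≤ arsinh w ≤ w ≤ √(1 + w²)`.
-/

open Real Finset Filter Topology Function

theorem deriv_deriv_comp_of_hasDerivAt {G G' u u' : ℝ → ℝ} {g'' u'' x : ℝ}
    (hG : ∀ y, HasDerivAt G (G' y) y) (hG' : HasDerivAt G' g'' (u x))
    (hu : ∀ᶠ t in 𝓝 x, HasDerivAt u (u' t) t) (hu' : HasDerivAt u' u'' x) :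
    deriv (deriv (G ∘ u)) x = g'' * u' x ^ 2 + G' (u x) * u'' := by
  have hderiv : deriv (G ∘ u) =ᶠ[𝓝 x] fun t => G' (u t) * u' t := by
    filter_upwards [hu] with t ht using ((hG (u t)).comp t ht).deriv
  rw [hderiv.deriv_eq]
  exact ((hG'.comp x hu.self_of_nhds).mul hu').deriv.trans (by rw [comp_apply]; ring)

theorem hasDerivAt_sqrt_add_sq (c x : ℝ) (hx : 0 < c + x ^ 2) :
    HasDerivAt (fun t => √(c + t ^ 2)) (x / √(c + x ^ 2)) x := by
  refine (((hasDerivAt_pow 2 x).const_add c).sqrt hx.ne').congr_deriv ?_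
  field_simp
  ring

theorem hasDerivAt_div_sqrt_add_sq (c x : ℝ) (hx : 0 < c + x ^ 2) :
    HasDerivAt (fun t => t / √(c + t ^ 2)) (c / √(c + x ^ 2) ^ 3) x := by
  have hs : 0 < √(c + x ^ 2) := sqrt_pos.2 hx
  refine ((hasDerivAt_id' x).div (hasDerivAt_sqrt_add_sq c x hx) hs.ne').congr_deriv ?_
  field_simp
  linear_combination sq_sqrt hx.le

noncomputable def arsinhSqDeriv (y : ℝ) : ℝ := 2 * arsinh y / √(1 + y ^ 2)

noncomputable def arsinhSqDeriv2 (y : ℝ) : ℝ :=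
  2 / (1 + y ^ 2) - 2 * y * arsinh y / √(1 + y ^ 2) ^ 3

theorem hasDerivAt_arsinh_sq (y : ℝ) :
    HasDerivAt (fun y => arsinh y ^ 2) (arsinhSqDeriv y) y :=
  ((hasDerivAt_arsinh y).pow 2).congr_deriv (by rw [arsinhSqDeriv]; ring)

theorem hasDerivAt_arsinhSqDeriv (y : ℝ) : HasDerivAt arsinhSqDeriv (arsinhSqDeriv2 y) y := by
  have hq : 0 < √(1 + y ^ 2) := sqrt_pos.2 (by positivity)
  refine (((hasDerivAt_arsinh y).const_mul 2).div
    (hasDerivAt_sqrt_add_sq 1 y (by positivity)) hq.ne').congr_deriv ?_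
  rw [arsinhSqDeriv2]
  field_simp
  linear_combination -√(1 + y ^ 2) * sq_sqrt (by positivity : (0 : ℝ) ≤ 1 + y ^ 2)

theorem deriv_deriv_arsinh_sqrt_add_sq_div_sq (c h : ℝ) {x : ℝ} (hx : 0 < c + x ^ 2) :
    deriv (deriv fun t => arsinh (√(c + t ^ 2) / h) ^ 2) x =
      arsinhSqDeriv2 (√(c + x ^ 2) / h) * (x / √(c + x ^ 2) / h) ^ 2 +
        arsinhSqDeriv (√(c + x ^ 2) / h) * (c / √(c + x ^ 2) ^ 3 / h) := by
  have hpos : ∀ᶠ t in 𝓝 x, 0 < c + t ^ 2 :=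
    (continuous_const.add (continuous_pow 2)).continuousAt.eventually (lt_mem_nhds hx)
  have hu : ∀ᶠ t in 𝓝 x,
      HasDerivAt (fun t => √(c + t ^ 2) / h) (t / √(c + t ^ 2) / h) t :=
    hpos.mono fun t ht => (hasDerivAt_sqrt_add_sq c t ht).div_const h
  exact deriv_deriv_comp_of_hasDerivAt (G := fun y => arsinh y ^ 2) hasDerivAt_arsinh_sq
    (hasDerivAt_arsinhSqDeriv _) hu ((hasDerivAt_div_sqrt_add_sq c x hx).div_const h)

theorem deriv_deriv_arsinh_div_sq (a : ℝ) {x : ℝ} (hx : x ≠ 0) :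
    deriv (deriv fun t => arsinh (a / t) ^ 2) x =
      arsinhSqDeriv2 (a / x) * (-(a / x ^ 2)) ^ 2 + arsinhSqDeriv (a / x) * (2 * a / x ^ 3) := by
  have hu : ∀ᶠ t in 𝓝 x, HasDerivAt (fun t => a / t) (-(a / t ^ 2)) t := by
    filter_upwards [isOpen_ne.mem_nhds hx] with t ht
    exact ((hasDerivAt_inv ht).const_mul a).congr_deriv (by ring)
  have hu' : HasDerivAt (fun t => -(a / t ^ 2)) (2 * a / x ^ 3) x := by
    refine ((hasDerivAt_const x a).div (hasDerivAt_pow 2 x) (pow_ne_zero 2 hx)).neg.congr_deriv ?_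
    field_simp
    ring
  exact deriv_deriv_comp_of_hasDerivAt (G := fun y => arsinh y ^ 2) hasDerivAt_arsinh_sq
    (hasDerivAt_arsinhSqDeriv _) hu hu'

theorem Real.arsinh_le_self {x : ℝ} (hx : 0 ≤ x) : arsinh x ≤ x :=
  calc arsinh x ≤ arsinh (sinh x) := arsinh_le_arsinh.2 (self_le_sinh_iff.2 hx)
    _ = x := arsinh_sinh x

theorem arsinhSqDeriv2_mul_add_arsinhSqDeriv_mul (k : ℝ) {w : ℝ} (hw : w ≠ 0) :
    arsinhSqDeriv2 w * (1 + w ^ 2) + arsinhSqDeriv w * (k / w + 2 * w) =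
      2 + 2 * arsinh w * (w / √(1 + w ^ 2)) + 2 * k * (arsinh w / w / √(1 + w ^ 2)) := by
  have hq : 0 < √(1 + w ^ 2) := sqrt_pos.2 (by positivity)
  rw [arsinhSqDeriv2, arsinhSqDeriv]
  field_simp
  linear_combination w ^ 2 * arsinh w * sq_sqrt (by positivity : (0 : ℝ) ≤ 1 + w ^ 2)

theorem arsinh_sq_laplacian_bounds {n w : ℝ} (hn : 2 ≤ n) (hw : 0 < w) :
    2 ≤ arsinhSqDeriv2 w * (1 + w ^ 2) + arsinhSqDeriv w * ((n - 2) / w + 2 * w) ∧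
      arsinhSqDeriv2 w * (1 + w ^ 2) + arsinhSqDeriv w * ((n - 2) / w + 2 * w) ≤
        2 * (n - 1) + 2 * arsinh w := by
  rw [arsinhSqDeriv2_mul_add_arsinhSqDeriv_mul _ hw.ne']
  have hg : 0 ≤ arsinh w := arsinh_nonneg_iff.2 hw.le
  have hq : 1 ≤ √(1 + w ^ 2) := one_le_sqrt.2 (by nlinarith)
  have hwq : w / √(1 + w ^ 2) ≤ 1 :=
    (div_le_one (by positivity)).2 (le_sqrt_of_sq_le (by linarith))
  have hgwq : arsinh w / w / √(1 + w ^ 2) ≤ 1 :=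
    div_le_one_of_le₀ (((div_le_one hw).2 (arsinh_le_self hw.le)).trans hq) (by positivity)
  have hn2 : 0 ≤ 2 * (n - 2) := by linarith
  constructor
  · have : 0 ≤ 2 * arsinh w * (w / √(1 + w ^ 2)) := by positivity
    have : 0 ≤ 2 * (n - 2) * (arsinh w / w / √(1 + w ^ 2)) := mul_nonneg hn2 (by positivity)
    linarith
  · have := mul_le_of_le_one_right (by positivity : 0 ≤ 2 * arsinh w) hwq
    have := mul_le_of_le_one_right hn2 hgwq
    linarith

section HalfSpace

variable {d : ℕ}

/-- `r_{d-1}²`; the last coordinate `z_d` of the paper is `z ⟨d - 1, _⟩`. -/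
def radialSq (z : Fin d → ℝ) : ℝ :=
  ∑ j ∈ univ.filter (fun j : Fin d => (j : ℕ) < d - 1), z j ^ 2

theorem card_filter_val_lt_pred : #(univ.filter fun j : Fin d => (j : ℕ) < d - 1) = d - 1 := by
  rw [Fin.card_filter_val_lt]
  omega

theorem radialSq_update_of_lt (z : Fin d → ℝ) {i : Fin d} (hi : (i : ℕ) < d - 1) (t : ℝ) :
    radialSq (update z i t) = radialSq z - z i ^ 2 + t ^ 2 := by
  have hmem : i ∈ univ.filter (fun j : Fin d => (j : ℕ) < d - 1) := by simpa using hi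
  rw [radialSq, radialSq, ← add_sum_erase _ (fun j => update z i t j ^ 2) hmem,
    ← add_sum_erase _ (fun j => z j ^ 2) hmem, update_self,
    sum_congr rfl fun j hj => by rw [update_of_ne (ne_of_mem_erase hj)]]
  ring

theorem radialSq_update_last (hd : d - 1 < d) (z : Fin d → ℝ) (t : ℝ) :
    radialSq (update z ⟨d - 1, hd⟩ t) = radialSq z := by
  refine sum_congr rfl fun j hj => ?_
  rw [update_of_ne]
  exact Fin.ne_of_val_ne (mem_filter.1 hj).2.ne

theorem deriv_deriv_arsinh_sq_update_of_lt (hd : d - 1 < d) (z : Fin d → ℝ) {i : Fin d}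
    (hi : (i : ℕ) < d - 1) (hR : 0 < radialSq z) :
    deriv (deriv fun t =>
        arsinh (√(radialSq (update z i t)) / update z i t ⟨d - 1, hd⟩) ^ 2) (z i) =
      arsinhSqDeriv2 (√(radialSq z) / z ⟨d - 1, hd⟩) *
          (z i / √(radialSq z) / z ⟨d - 1, hd⟩) ^ 2 +
        arsinhSqDeriv (√(radialSq z) / z ⟨d - 1, hd⟩) *
          ((radialSq z - z i ^ 2) / √(radialSq z) ^ 3 / z ⟨d - 1, hd⟩) := by
  have hlast : (⟨d - 1, hd⟩ : Fin d) ≠ i := Fin.ne_of_val_ne (by simp only; omega)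
  simp only [radialSq_update_of_lt z hi, update_of_ne hlast]
  rw [deriv_deriv_arsinh_sqrt_add_sq_div_sq _ _ (by linarith), sub_add_cancel]

theorem deriv_deriv_arsinh_sq_update_last (hd : d - 1 < d) (z : Fin d → ℝ)
    (hh : z ⟨d - 1, hd⟩ ≠ 0) :
    deriv (deriv fun t =>
        arsinh (√(radialSq (update z ⟨d - 1, hd⟩ t)) /
          update z ⟨d - 1, hd⟩ t ⟨d - 1, hd⟩) ^ 2)
        (z ⟨d - 1, hd⟩) =
      arsinhSqDeriv2 (√(radialSq z) / z ⟨d - 1, hd⟩) *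
          (-(√(radialSq z) / z ⟨d - 1, hd⟩ ^ 2)) ^ 2 +
        arsinhSqDeriv (√(radialSq z) / z ⟨d - 1, hd⟩) *
          (2 * √(radialSq z) / z ⟨d - 1, hd⟩ ^ 3) := by
  simp only [radialSq_update_last, update_self]
  exact deriv_deriv_arsinh_div_sq _ hh

theorem sq_mul_sum_deriv_deriv_arsinh_sq (hd : d - 1 < d) (z : Fin d → ℝ)
    (hh : z ⟨d - 1, hd⟩ ≠ 0) (hR : 0 < radialSq z) :
    z ⟨d - 1, hd⟩ ^ 2 * ∑ i, deriv (deriv fun t =>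
        arsinh (√(radialSq (update z i t)) / update z i t ⟨d - 1, hd⟩) ^ 2) (z i) =
      arsinhSqDeriv2 (√(radialSq z) / z ⟨d - 1, hd⟩) *
          (1 + (√(radialSq z) / z ⟨d - 1, hd⟩) ^ 2) +
        arsinhSqDeriv (√(radialSq z) / z ⟨d - 1, hd⟩) *
          (((d : ℝ) - 2) / (√(radialSq z) / z ⟨d - 1, hd⟩) +
            2 * (√(radialSq z) / z ⟨d - 1, hd⟩)) := by
  have hcompl : univ.filter (fun i : Fin d => ¬ (i : ℕ) < d - 1) = {⟨d - 1, hd⟩} := by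
    ext i
    simp only [mem_filter, mem_univ, true_and, mem_singleton, Fin.ext_iff]
    omega
  rw [← sum_filter_add_sum_filter_not univ (fun i : Fin d => (i : ℕ) < d - 1), hcompl,
    sum_singleton, deriv_deriv_arsinh_sq_update_last hd z hh,
    sum_congr rfl fun i hi => deriv_deriv_arsinh_sq_update_of_lt hd z (mem_filter.1 hi).2 hR]
  simp only [sum_add_distrib, ← mul_sum, div_pow, ← sum_div, sum_sub_distrib, sum_const,
    card_filter_val_lt_pred, nsmul_eq_mul, Nat.cast_pred (by omega : 0 < d)]
  have hr : √(radialSq z) ≠ 0 := (sqrt_pos.2 hR).ne'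
  have hRr : radialSq z = √(radialSq z) ^ 2 := (sq_sqrt hR.le).symm
  set r := √(radialSq z)
  rw [← radialSq, hRr]
  clear_value r
  generalize z ⟨d - 1, hd⟩ = h at hh ⊢
  field_simp
  ring

end HalfSpace

/-- In the half-space model, with `g(z) = arsinh(r_{d-1}/z_d)` and `f = g²`, one has
`2 ≤ z_d² · Δ_e f(z) ≤ 2(d−1) + 2·g(z)`. -/
theorem laplacian_sq_dist_bounds (d : ℕ) (hd : 2 ≤ d) (z : Fin d → ℝ)
    (hz : 0 < z ⟨d - 1, by omega⟩)
    (hr : 0 < Real.sqrt (∑ i ∈ Finset.univ.filter (fun i : Fin d => (i : ℕ) < d - 1), z i ^ 2)) :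
    2 ≤ (z ⟨d - 1, by omega⟩) ^ 2 *
        (∑ i : Fin d,
          deriv (deriv (fun t : ℝ =>
            (Real.arsinh
              (Real.sqrt (∑ j ∈ Finset.univ.filter (fun j : Fin d => (j : ℕ) < d - 1),
                  (Function.update z i t) j ^ 2) /
                (Function.update z i t) ⟨d - 1, by omega⟩)) ^ 2)) (z i)) ∧
    (z ⟨d - 1, by omega⟩) ^ 2 *
        (∑ i : Fin d,
          deriv (deriv (fun t : ℝ =>
            (Real.arsinh
              (Real.sqrt (∑ j ∈ Finset.univ.filter (fun j : Fin d => (j : ℕ) < d - 1),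
                  (Function.update z i t) j ^ 2) /
                (Function.update z i t) ⟨d - 1, by omega⟩)) ^ 2)) (z i))
      ≤ 2 * ((d : ℝ) - 1)
          + 2 * Real.arsinh
              (Real.sqrt (∑ i ∈ Finset.univ.filter (fun i : Fin d => (i : ℕ) < d - 1), z i ^ 2) /
                z ⟨d - 1, by omega⟩) := by
  have hlast : d - 1 < d := by omega
  have hR : 0 < radialSq z := sqrt_pos.1 hr
  have hn : (2 : ℝ) ≤ d := by exact_mod_cast hd
  have hbounds := arsinh_sq_laplacian_bounds (w := √(radialSq z) / z ⟨d - 1, hlast⟩) hn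
    (div_pos hr hz)
  rwa [← sq_mul_sum_deriv_deriv_arsinh_sq hlast z hz.ne' hR] at hbounds
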